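/- Let A be a unital ring with idempotent P, Q = 1-P, and suppose φ is a map with φ(P) central and φ(PAQ) ⊆ PAQ. Then for any M ∈ PAQ and the identity M = p_n(M,P,...,P,Q) (n even) or M = p_n(P,M,P,...,P,Q) (n odd), applying the Lie n-derivation identity yields [M, φ(Q)] = 0. Hence if additionally [N, φ(Q)] = 0 for all N ∈ QAP and the ring satisfies the condition that commuting with all of PAQ and QAP implies centrality, then φ(Q) ∈ Z(A). -/

import Mathlib

/-- The left-nested iterated commutator `p_n(x₁,…,xₙ) = [...[[x₁,x₂],x₃],…,xₙ]`. -/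
def pComm18 {A : Type*} [Ring A] : List A → A
  | [] => 0
  | a :: t => t.foldl (fun x y => x * y - y * x) a

/-!
For `M ∈ PAQ` we have `[P, M] = M`, `[M, P] = -M` and `[M, Q] = M`, so for `k` even
`M = p_n(M, P, …, P, Q)` (`n = k + 2`) and `M = p_n(P, M, P, …, P, Q)` (`n = k + 3`).
Applying `φ` to this identity, every summand in which `φ` hits a `P` vanishes since `φ(P)` is
central; the summand at `M` is again `φ(M)` because `φ(M) ∈ PAQ`, and the summand at `Q` is
`[M, φ(Q)]`. Hence `φ(M) = φ(M) + [M, φ(Q)]`. Together with `[QAP, φ(Q)] = 0` the centrality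
criterion gives `φ(Q) ∈ Z(A)`.
-/

lemma List.ofFn_snoc {α : Type*} {k : ℕ} (f : Fin k → α) (c : α) :
    List.ofFn (Fin.snoc f c : Fin (k + 1) → α) = List.ofFn f ++ [c] := by
  rw [List.ofFn_succ']
  simp

lemma Fin.cons_snoc_const_apply {α : Type*} {k : ℕ} (a b c : α) {i : Fin (k + 2)}
    (h0 : i ≠ 0) (hl : i ≠ Fin.last (k + 1)) :
    (Fin.cons a (Fin.snoc (fun _ : Fin k => b) c) : Fin (k + 2) → α) i = b := by
  induction i using Fin.cases with
  | zero => exact absurd rfl h0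
  | succ j =>
    induction j using Fin.lastCases with
    | last => exact absurd rfl hl
    | cast j => simp

section IteratedCommutator

variable {A : Type*} [Ring A]

def IsLieNDerivation (n : ℕ) (φ : A → A) : Prop :=
  ∀ x : Fin n → A,
    φ (pComm18 (List.ofFn x)) = ∑ i, pComm18 (List.ofFn (Function.update x i (φ (x i))))

lemma pComm18_cons (a : A) (t : List A) :
    pComm18 (a :: t) = t.foldl (fun x y => x * y - y * x) a := rfl

lemma pComm18_cons_cons (a b : A) (t : List A) :
    pComm18 (a :: b :: t) = pComm18 ((a * b - b * a) :: t) := rfl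

lemma foldl_commutator_zero (l : List A) : l.foldl (fun x y => x * y - y * x) 0 = 0 := by
  induction l with
  | nil => rfl
  | cons y t ih => simpa using ih

lemma pComm18_eq_zero_of_mem_center {l : List A} (hl : 2 ≤ l.length) {z : A}
    (hz : z ∈ Set.center A) (hzl : z ∈ l) : pComm18 l = 0 := by
  have hcomm (b : A) : b * z - z * b = 0 := sub_eq_zero.mpr (Semigroup.mem_center_iff.mp hz b)
  obtain ⟨s, t, rfl⟩ := List.append_of_mem hzl
  rcases s with _ | ⟨a, s⟩
  · rcases t with _ | ⟨b, t⟩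
    · simp at hl
    rw [List.nil_append, pComm18_cons_cons, ← neg_sub, hcomm, neg_zero, pComm18_cons,
      foldl_commutator_zero]
  · rw [List.cons_append, pComm18_cons, List.foldl_append, List.foldl_cons, hcomm,
      foldl_commutator_zero]

lemma sum_pComm18_update_eq_add {n : ℕ} (hn : 2 ≤ n) (φ : A → A) (x : Fin n → A)
    {a b : Fin n} (hab : a ≠ b) (hcen : ∀ i, i ≠ a → i ≠ b → φ (x i) ∈ Set.center A) :
    ∑ i, pComm18 (List.ofFn (Function.update x i (φ (x i))))
      = pComm18 (List.ofFn (Function.update x a (φ (x a))))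
        + pComm18 (List.ofFn (Function.update x b (φ (x b)))) :=
  Fintype.sum_eq_add a b hab fun i ⟨hia, hib⟩ =>
    pComm18_eq_zero_of_mem_center (by simpa using hn) (hcen i hia hib)
      (List.mem_ofFn.mpr ⟨i, Function.update_self ..⟩)

end IteratedCommutator

section Corner

variable {A : Type*} [Ring A] {P a : A}

lemma idem_mul_corner_eq_self (hP : P * P = P) (ha : a = P * a * (1 - P)) : P * a = a := by
  rw [ha, ← mul_assoc, ← mul_assoc, hP]

lemma corner_mul_idem_eq_zero (hP : P * P = P) (ha : a = P * a * (1 - P)) : a * P = 0 := by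
  rw [ha, mul_assoc, sub_mul, one_mul, hP, sub_self, mul_zero]

lemma corner_neg (ha : a = P * a * (1 - P)) : -a = P * (-a) * (1 - P) := by
  rw [mul_neg, neg_mul, ← ha]

lemma commutator_idem_corner (hP : P * P = P) (ha : a = P * a * (1 - P)) :
    P * a - a * P = a := by
  rw [idem_mul_corner_eq_self hP ha, corner_mul_idem_eq_zero hP ha, sub_zero]

lemma commutator_corner_compl (hP : P * P = P) (ha : a = P * a * (1 - P)) :
    a * (1 - P) - (1 - P) * a = a := by
  rw [mul_sub, sub_mul, idem_mul_corner_eq_self hP ha, corner_mul_idem_eq_zero hP ha]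
  simp

lemma foldl_commutator_replicate_idem (hP : P * P = P) (k : ℕ) :
    ∀ {a : A}, a = P * a * (1 - P) →
      (List.replicate k P).foldl (fun x y => x * y - y * x) a = (-1) ^ k * a := by
  induction k with
  | zero => simp
  | succ k ih =>
    intro a ha
    have hbr : a * P - P * a = -a := by rw [← neg_sub, commutator_idem_corner hP ha]
    rw [List.replicate_succ, List.foldl_cons, hbr, ih (corner_neg ha), pow_succ]
    simp

lemma pComm18_corner_replicate (hP : P * P = P) (ha : a = P * a * (1 - P)) {k : ℕ}
    (hk : Even k) (c : A) : pComm18 (a :: (List.replicate k P ++ [c])) = a * c - c * a := by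
  rw [pComm18_cons, List.foldl_append, foldl_commutator_replicate_idem hP k ha,
    hk.neg_one_pow, one_mul]
  rfl

lemma pComm18_idem_cons_corner (hP : P * P = P) (ha : a = P * a * (1 - P)) (t : List A) :
    pComm18 (P :: a :: t) = pComm18 (a :: t) := by
  rw [pComm18_cons_cons, commutator_idem_corner hP ha]

end Corner

section LieDerivation

variable {A : Type*} [Ring A] {P : A} {φ : A → A} {M : A}

lemma commutator_compl_eq_zero_of_even (hP : P * P = P) (hφP : φ P ∈ Set.center A)
    (hM : M = P * M * (1 - P)) (hφM : φ M = P * φ M * (1 - P)) {k : ℕ} (hk : Even k)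
    (hφ : IsLieNDerivation (k + 2) φ) : M * φ (1 - P) - φ (1 - P) * M = 0 := by
  have h := hφ (Fin.cons M (Fin.snoc (fun _ : Fin k => P) (1 - P)))
  rw [sum_pComm18_update_eq_add (by omega) φ _ (a := 0) (b := (Fin.last k).succ)
    (Fin.succ_ne_zero _).symm fun i h0 hl => by
      rwa [Fin.cons_snoc_const_apply _ _ _ h0 (Fin.succ_last k ▸ hl)]] at h
  simp only [Fin.update_cons_zero, ← Fin.cons_update, Fin.update_snoc_last, Fin.cons_zero,
    Fin.cons_succ, Fin.snoc_last, List.ofFn_cons, List.ofFn_snoc, List.ofFn_const] at h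
  rw [pComm18_corner_replicate hP hM hk, pComm18_corner_replicate hP hφM hk,
    pComm18_corner_replicate hP hM hk, commutator_corner_compl hP hM,
    commutator_corner_compl hP hφM] at h
  exact left_eq_add.mp h

lemma commutator_compl_eq_zero_of_odd (hP : P * P = P) (hφP : φ P ∈ Set.center A)
    (hM : M = P * M * (1 - P)) (hφM : φ M = P * φ M * (1 - P)) {k : ℕ} (hk : Even k)
    (hφ : IsLieNDerivation (k + 3) φ) : M * φ (1 - P) - φ (1 - P) * M = 0 := by
  have h := hφ (Fin.cons P (Fin.cons M (Fin.snoc (fun _ : Fin k => P) (1 - P))))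
  rw [sum_pComm18_update_eq_add (by omega) φ _ (a := (0 : Fin (k + 2)).succ)
    (b := (Fin.last k).succ.succ) (fun h => Fin.succ_ne_zero _ (Fin.succ_injective _ h).symm)
    fun i h1 hl => by
      induction i using Fin.cases with
      | zero => exact hφP
      | succ j =>
        rwa [Fin.cons_succ, Fin.cons_snoc_const_apply _ _ _ (fun h => h1 (congrArg _ h))
          (fun h => hl (by rw [h, ← Fin.succ_last]))]] at h
  simp only [Fin.update_cons_zero, ← Fin.cons_update, Fin.update_snoc_last, Fin.cons_zero,
    Fin.cons_succ, Fin.snoc_last, List.ofFn_cons, List.ofFn_snoc, List.ofFn_const] at h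
  rw [pComm18_idem_cons_corner hP hM, pComm18_idem_cons_corner hP hφM,
    pComm18_idem_cons_corner hP hM, pComm18_corner_replicate hP hM hk,
    pComm18_corner_replicate hP hφM hk, pComm18_corner_replicate hP hM hk,
    commutator_corner_compl hP hM, commutator_corner_compl hP hφM] at h
  exact left_eq_add.mp h

lemma commutator_compl_eq_zero (hP : P * P = P) (hφP : φ P ∈ Set.center A)
    (hM : M = P * M * (1 - P)) (hφM : φ M = P * φ M * (1 - P)) {n : ℕ} (hn : 2 ≤ n)
    (hφ : IsLieNDerivation n φ) : M * φ (1 - P) - φ (1 - P) * M = 0 := by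
  rcases Nat.even_or_odd n with ⟨r, hr⟩ | ⟨r, hr⟩
  · obtain ⟨k, hk, rfl⟩ : ∃ k, Even k ∧ n = k + 2 := ⟨n - 2, ⟨r - 1, by omega⟩, by omega⟩
    exact commutator_compl_eq_zero_of_even hP hφP hM hφM hk hφ
  · obtain ⟨k, hk, rfl⟩ : ∃ k, Even k ∧ n = k + 3 := ⟨n - 3, ⟨r - 1, by omega⟩, by omega⟩
    exact commutator_compl_eq_zero_of_odd hP hφP hM hφM hk hφ

end LieDerivation

/-- Let `φ` be a nonlinear Lie `n`-derivation on a unital ring with idempotent `P`,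
`Q = 1 - P`, such that `φ(P)` is central and `φ(PAQ) ⊆ PAQ`. Then `[M, φ(Q)] = 0` for all
`M ∈ PAQ`; if moreover `[N, φ(Q)] = 0` for all `N ∈ QAP` and every element commuting with
all of `PAQ` and `QAP` is central, then `φ(Q) ∈ Z(A)`. -/
theorem stmt18 {A : Type*} [Ring A] (P : A) (hP : P * P = P)
    (n : ℕ) (hn : 2 ≤ n) (φ : A → A)
    (hφ : ∀ x : Fin n → A,
      φ (pComm18 (List.ofFn x))
        = ∑ i, pComm18 (List.ofFn (Function.update x i (φ (x i)))))
    (hφP : φ P ∈ Set.center A)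
    (hφ12 : ∀ M : A, M = P * M * (1 - P) → φ M = P * (φ M) * (1 - P))
    (h21 : ∀ N : A, N = (1 - P) * N * P → N * φ (1 - P) - φ (1 - P) * N = 0)
    (hcentcond : ∀ T : A,
      (∀ M : A, M = P * M * (1 - P) → T * M = M * T) →
      (∀ N : A, N = (1 - P) * N * P → T * N = N * T) →
      T ∈ Set.center A) :
    (∀ M : A, M = P * M * (1 - P) → M * φ (1 - P) - φ (1 - P) * M = 0) ∧
    φ (1 - P) ∈ Set.center A := by
  have hPAQ (M : A) (hM : M = P * M * (1 - P)) : M * φ (1 - P) - φ (1 - P) * M = 0 :=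
    commutator_compl_eq_zero hP hφP hM (hφ12 M hM) hn hφ
  exact ⟨hPAQ, hcentcond _ (fun M hM => (sub_eq_zero.mp (hPAQ M hM)).symm)
    fun N hN => (sub_eq_zero.mp (h21 N hN)).symm⟩
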